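/- If d is a V-category structure on X then α_X(γ_X(d)) = d, i.e., the co-closure of the Galois connection (γ,α) is the identity on V-categories. -/

import Mathlib

/-! The inequality `d ≤ α(γ(d))` holds for every `V`-graph. Conversely, a Yoneda argument:
by transitivity each representable `d x` is non-expansive, and by reflexivity
`d_V(d(x,x), d(x,y)) ≤ d_V(1, d(x,y)) = d(x,y)`. -/

variable {V X : Type*}

/-- Residuation (internal hom) of a quantale. -/
def dres [CommMonoid V] [CompleteLattice V] (a c : V) : V := sSup {u | u * a ≤ c}

/-- From a set of `V`-valued predicates, the greatest conformance making them non-expansive. -/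
def alphaMap [CommMonoid V] [CompleteLattice V] (S : Set (X → V)) : X → X → V :=
  fun x₁ x₂ => ⨅ f ∈ S, dres (f x₁) (f x₂)

/-- The set of predicates non-expansive w.r.t. a `V`-graph `d`. -/
def gammaMap [CommMonoid V] [CompleteLattice V] (d : X → X → V) : Set (X → V) :=
  {f | ∀ x₁ x₂, d x₁ x₂ ≤ dres (f x₁) (f x₂)}

section GaloisConnection

variable [CommMonoid V] [CompleteLattice V]

theorem alphaMap_le_dres {S : Set (X → V)} {f : X → V} (hf : f ∈ S) (x₁ x₂ : X) :
    alphaMap S x₁ x₂ ≤ dres (f x₁) (f x₂) :=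
  iInf₂_le f hf

theorem le_alphaMap_gammaMap (d : X → X → V) : d ≤ alphaMap (gammaMap d) :=
  fun x₁ x₂ => le_iInf₂ fun _ hf => hf x₁ x₂

end GaloisConnection

section Quantale

variable [CommMonoid V] [CompleteLattice V] [IsQuantale V]

theorem le_dres_iff {u a c : V} : u ≤ dres a c ↔ u * a ≤ c :=
  Quantale.leftMulResiduation_le_iff_mul_le

theorem dres_le_of_one_le {a c : V} (ha : 1 ≤ a) : dres a c ≤ c :=
  calc dres a c = dres a c * 1 := (mul_one _).symm
    _ ≤ dres a c * a := mul_le_mul_right ha _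
    _ ≤ c := le_dres_iff.mp le_rfl

theorem mem_gammaMap_of_trans {d : X → X → V} (htrans : ∀ x y z, d x y * d y z ≤ d x z)
    (x : X) : d x ∈ gammaMap d := fun y z =>
  le_dres_iff.mpr (mul_comm (d y z) (d x y) ▸ htrans x y z)

end Quantale

theorem stmt14 [CommMonoid V] [CompleteLattice V] [IsQuantale V]
    (d : X → X → V)
    (hrefl : ∀ x, (1 : V) ≤ d x x)
    (htrans : ∀ x y z, d x y * d y z ≤ d x z) :
    alphaMap (gammaMap d) = d := by
  refine le_antisymm (fun x₁ x₂ => ?_) (le_alphaMap_gammaMap d)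
  calc alphaMap (gammaMap d) x₁ x₂ ≤ dres (d x₁ x₁) (d x₁ x₂) :=
        alphaMap_le_dres (mem_gammaMap_of_trans htrans x₁) x₁ x₂
    _ ≤ d x₁ x₂ := dres_le_of_one_le (hrefl x₁)
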